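/- arXiv:2301.09643 — 2 statements merged into one kernel-verified Lean document; each statement's English description precedes it below -/
import Mathlib

section
/- The sequence of p-golden ratios Φ_p tends to 2 as p → ∞. -/
/-!
Multiplying `x ^ p = 1 + x + ⋯ + x ^ (p - 1)` by `x - 1` gives `x ^ p * (2 - x) = 1`, so `Φ_p < 2`
and `Φ_p > 1`. Then each of the `p` terms of the sum is at least `1`, so `Φ_p ^ p ≥ p` and
`2 - Φ_p = 1 / Φ_p ^ p ≤ 1 / p`.
-/

open Finset Filter Topology

theorem sum_Icc_one_pred_pow_add_one {R : Type*} [CommSemiring R] (x : R) {p : ℕ} (hp : 1 ≤ p) :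
    ∑ k ∈ Icc 1 (p - 1), x ^ k + 1 = ∑ k ∈ range p, x ^ k := by
  rw [Nat.range_eq_Icc_zero_sub_one _ (by omega), ← add_sum_Ioc_eq_sum_Icc (Nat.zero_le _),
    ← Icc_add_one_left_eq_Ioc, pow_zero, add_comm, zero_add]

theorem pow_mul_two_sub_eq_one {R : Type*} [CommRing R] {x : R} {p : ℕ}
    (hxp : x ^ p = ∑ k ∈ range p, x ^ k) : x ^ p * (2 - x) = 1 := by
  have := geom_sum_mul x p
  rw [← hxp] at this
  linear_combination -this

section
variable {x : ℝ} {p : ℕ}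

theorem one_lt_of_pow_eq_geom_sum (hx : 0 < x) (hp : 2 ≤ p)
    (hxp : x ^ p = ∑ k ∈ range p, x ^ k) : 1 < x := by
  have h_sum : 1 + x ≤ x ^ p := by
    calc 1 + x = ∑ k ∈ range 2, x ^ k := by simp [sum_range_succ]
      _ ≤ ∑ k ∈ range p, x ^ k :=
        sum_le_sum_of_subset_of_nonneg (range_subset_range.2 hp) fun _ _ _ => by positivity
      _ = x ^ p := hxp.symm
  nlinarith [pow_mul_two_sub_eq_one hxp]

theorem two_sub_le_inv_of_pow_eq_geom_sum (hx : 0 < x) (hp : 2 ≤ p)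
    (hxp : x ^ p = ∑ k ∈ range p, x ^ k) : 2 - x ≤ (p : ℝ)⁻¹ := by
  have h_one_lt := one_lt_of_pow_eq_geom_sum hx hp hxp
  have h_p_le : (p : ℝ) ≤ x ^ p := by
    calc (p : ℝ) = ∑ _k ∈ range p, (1 : ℝ) := by simp
      _ ≤ ∑ k ∈ range p, x ^ k := sum_le_sum fun k _ => one_le_pow₀ h_one_lt.le
      _ = x ^ p := hxp.symm
  have h_two_sub : 2 - x = (x ^ p)⁻¹ := eq_inv_of_mul_eq_one_right (pow_mul_two_sub_eq_one hxp)
  rw [h_two_sub]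
  exact inv_anti₀ (by positivity) h_p_le

theorem lt_two_of_pow_eq_geom_sum (hx : 0 < x) (hxp : x ^ p = ∑ k ∈ range p, x ^ k) : x < 2 := by
  have := pow_mul_two_sub_eq_one hxp
  nlinarith [pow_pos hx p]

end

theorem p_golden_ratio_tendsto_two (Φ : ℕ → ℝ)
    (h : ∀ p, 2 ≤ p → 0 < Φ p ∧
      (Φ p) ^ p - (∑ k ∈ Finset.Icc 1 (p - 1), (Φ p) ^ k) - 1 = 0) :
    Filter.Tendsto Φ Filter.atTop (nhds 2) := by
  have h_geom : ∀ p, 2 ≤ p → Φ p ^ p = ∑ k ∈ range p, Φ p ^ k := fun p hp => by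
    rw [← sum_Icc_one_pred_pow_add_one _ (by omega)]
    linarith [(h p hp).2]
  have h_lower : Tendsto (fun p : ℕ => 2 - (p : ℝ)⁻¹) atTop (𝓝 2) := by
    simpa using tendsto_inv_atTop_nhds_zero_nat.const_sub (2 : ℝ)
  refine tendsto_of_tendsto_of_tendsto_of_le_of_le' h_lower tendsto_const_nhds ?_ ?_
  all_goals filter_upwards [eventually_ge_atTop 2] with p hp
  · linarith [two_sub_le_inv_of_pow_eq_geom_sum (h p hp).1 hp (h_geom p hp)]
  · exact (lt_two_of_pow_eq_geom_sum (h p hp).1 (h_geom p hp)).le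
end

section
/- For every integer p ≥ 2, the p-golden ratio Φ_p satisfies Φ_p ≥ 2 − 2^{1−p}, i.e., X_p(2 − 2^{1−p}) ≤ 0 where X_p(x) = x^p − ∑_{k=1}^{p−1} x^k − 1. -/
/-!
Multiplying by `x - 1` telescopes the geometric sum: `(x - 1) X_p(x) = x^p (x - 2) + 1`.
At `a = 2 - 2^{1-p} = 2 (1 - 2^{-p})` the right-hand side is `1 - 2 (1 - 2^{-p})^p`, which is
nonpositive by Bernoulli's inequality and `2p ≤ 2^p`. Since `X_p(2) = 1 > 0`, the intermediate
value theorem gives a root in `[a, 2]`, and uniqueness of the positive root makes it `Φ_p`.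
-/

/-- The polynomial `X_p` whose unique positive root is the `p`-golden ratio `Φ_p`. -/
def goldenPoly {R : Type*} [CommRing R] (p : ℕ) (x : R) : R :=
  x ^ p - ∑ k ∈ Finset.Icc 1 (p - 1), x ^ k - 1

theorem sum_Icc_one_pow_add_one {R : Type*} [CommRing R] (q : ℕ) (x : R) :
    ∑ k ∈ Finset.Icc 1 q, x ^ k + 1 = ∑ k ∈ Finset.range (q + 1), x ^ k := by
  rw [Finset.sum_range_succ', ← Finset.Ico_add_one_right_eq_Icc, Finset.sum_Ico_eq_sum_range]
  simp only [add_comm 1, pow_zero, Nat.add_sub_cancel]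

theorem sub_one_mul_goldenPoly {R : Type*} [CommRing R] {p : ℕ} (hp : 1 ≤ p) (x : R) :
    (x - 1) * goldenPoly p x = x ^ p * (x - 2) + 1 := by
  obtain ⟨q, rfl⟩ : ∃ q, p = q + 1 := ⟨p - 1, by omega⟩
  have h := geom_sum_mul x (q + 1)
  rw [← sum_Icc_one_pow_add_one] at h
  rw [goldenPoly, Nat.add_sub_cancel]
  linear_combination -h

theorem goldenPoly_two {R : Type*} [CommRing R] {p : ℕ} (hp : 1 ≤ p) :
    goldenPoly p (2 : R) = 1 := by
  have h := sub_one_mul_goldenPoly hp (2 : R)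
  norm_num at h
  exact h

theorem continuous_goldenPoly {R : Type*} [CommRing R] [TopologicalSpace R] [IsTopologicalRing R]
    (p : ℕ) : Continuous (goldenPoly p : R → R) := by
  unfold goldenPoly
  fun_prop

theorem two_mul_le_two_pow (n : ℕ) : 2 * n ≤ 2 ^ n := by
  cases n with
  | zero => simp
  | succ n =>
    have := @Nat.lt_two_pow_self n
    rw [pow_succ]
    omega

theorem one_half_le_one_sub_inv_two_pow_pow (n : ℕ) : (1 / 2 : ℝ) ≤ (1 - (2 ^ n)⁻¹) ^ n := by
  have hpow : (1 : ℝ) ≤ 2 ^ n := one_le_pow₀ one_le_two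
  have hn : (n : ℝ) * (2 ^ n)⁻¹ ≤ 1 / 2 := by
    rw [← div_eq_mul_inv, div_le_iff₀ (by positivity)]
    have h2n : (2 * n : ℝ) ≤ 2 ^ n := by exact_mod_cast two_mul_le_two_pow n
    linarith
  have hbern := one_add_mul_le_pow (a := -(2 ^ n : ℝ)⁻¹)
    (by linarith [inv_le_one_of_one_le₀ hpow]) n
  rw [← sub_eq_add_neg] at hbern
  linarith

theorem goldenPoly_two_sub_two_zpow_nonpos {p : ℕ} (hp : 2 ≤ p) :
    goldenPoly p (2 - 2 ^ ((1 : ℤ) - p) : ℝ) ≤ 0 := by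
  set t : ℝ := (2 ^ p)⁻¹ with ht
  have hzpow : (2 : ℝ) ^ ((1 : ℤ) - p) = 2 * t := by
    rw [zpow_sub₀ two_ne_zero, zpow_one, zpow_natCast, div_eq_mul_inv]
  have ht_pos : 0 < t := by positivity
  have ht_le : t ≤ 1 / 4 := by
    rw [ht, inv_le_comm₀ (by positivity) (by norm_num)]
    calc (1 / 4 : ℝ)⁻¹ = 2 ^ 2 := by norm_num
      _ ≤ 2 ^ p := pow_le_pow_right₀ one_le_two hp
  have hmul : (2 - 2 ^ ((1 : ℤ) - p) - 1 : ℝ) * goldenPoly p (2 - 2 ^ ((1 : ℤ) - p) : ℝ)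
      = 1 - 2 * (1 - t) ^ p := by
    rw [sub_one_mul_goldenPoly (by omega), hzpow,
      show (2 : ℝ) - 2 * t = 2 * (1 - t) by ring, mul_pow]
    have : (2 : ℝ) ^ p * t = 1 := mul_inv_cancel₀ (by positivity)
    linear_combination (-(2 * (1 - t) ^ p)) * this
  refine nonpos_of_mul_nonpos_right ?_ (show (0 : ℝ) < 2 - 2 ^ ((1 : ℤ) - p) - 1 by
    rw [hzpow]; linarith)
  rw [hmul]
  linarith [one_half_le_one_sub_inv_two_pow_pow p]

theorem le_of_goldenPoly_nonpos {p : ℕ} (hp : 1 ≤ p) {x Φ : ℝ} (hx_pos : 0 < x) (hx_le : x ≤ 2)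
    (hx : goldenPoly p x ≤ 0) (huniq : ∀ y : ℝ, 0 < y → goldenPoly p y = 0 → y = Φ) : x ≤ Φ := by
  obtain ⟨y, hy, hy_root⟩ := intermediate_value_Icc hx_le (continuous_goldenPoly p).continuousOn
    ⟨hx, (goldenPoly_two hp).ge.trans' zero_le_one⟩
  exact huniq y (hx_pos.trans_le hy.1) hy_root ▸ hy.1

theorem p_golden_ratio_lower_bound_general (p : ℕ) (hp : 2 ≤ p) (Φ : ℝ)
    (huniq : ∀ y : ℝ, 0 < y →
      y ^ p - (∑ k ∈ Finset.Icc 1 (p - 1), y ^ k) - 1 = 0 → y = Φ) :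
    Φ ≥ 2 - 2 ^ ((1 : ℤ) - p) ∧
    (2 - 2 ^ ((1 : ℤ) - p) : ℝ) ^ p -
      (∑ k ∈ Finset.Icc 1 (p - 1), (2 - 2 ^ ((1 : ℤ) - p) : ℝ) ^ k) - 1 ≤ 0 := by
  have hX := goldenPoly_two_sub_two_zpow_nonpos hp
  have hzpow_pos : (0 : ℝ) < 2 ^ ((1 : ℤ) - p) := by positivity
  have hzpow_le : (2 : ℝ) ^ ((1 : ℤ) - p) ≤ 1 := zpow_le_one_of_nonpos₀ one_le_two (by omega)
  exact ⟨le_of_goldenPoly_nonpos (by omega) (by linarith) (by linarith) hX huniq, hX⟩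

theorem p_golden_ratio_lower_bound (p : ℕ) (hp : 2 ≤ p) (Φ : ℝ)
    (hpos : 0 < Φ)
    (hroot : Φ ^ p - (∑ k ∈ Finset.Icc 1 (p - 1), Φ ^ k) - 1 = 0)
    (huniq : ∀ y : ℝ, 0 < y →
      y ^ p - (∑ k ∈ Finset.Icc 1 (p - 1), y ^ k) - 1 = 0 → y = Φ) :
    Φ ≥ 2 - 2 ^ ((1 : ℤ) - p) ∧
    (2 - 2 ^ ((1 : ℤ) - p) : ℝ) ^ p -
      (∑ k ∈ Finset.Icc 1 (p - 1), (2 - 2 ^ ((1 : ℤ) - p) : ℝ) ^ k) - 1 ≤ 0 :=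
  p_golden_ratio_lower_bound_general p hp Φ huniq
end
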